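/- L² error estimate for the projection step: let m_e be a grid function with |(m_e)_i| = 1 for every i, let m¹ be a grid function with ‖m¹‖_∞ ≤ K, and set m̲ = m_e + h²·m¹. Let m̃ be a grid function with |m̃_i| ≥ 1/2 for every i, and define the projected grid function m by m_i = m̃_i/|m̃_i|. Set e = m − m̲ and ẽ = m̃ − m̲. Then ‖e‖₂ ≤ 2·‖ẽ‖₂ + K·h². -/

import Mathlib

noncomputable section

open Finset

/-- Euclidean dot product on ℝ³. -/
def dot3 (a b : Fin 3 → ℝ) : ℝ := ∑ j, a j * b j

/-- Euclidean norm on ℝ³. -/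
def norm3 (a : Fin 3 → ℝ) : ℝ := Real.sqrt (dot3 a a)

/-- Cross product on ℝ³. -/
def cross3 (a b : Fin 3 → ℝ) : Fin 3 → ℝ :=
  ![a 1 * b 2 - a 2 * b 1, a 2 * b 0 - a 0 * b 2, a 0 * b 1 - a 1 * b 0]

/-- Mesh size `h = 1/N` of the uniform 1-D grid with `N` cells. -/
def gridh (N : ℕ) : ℝ := 1 / N

/-- Neumann discrete Laplacian on grid functions `{1,…,N} → ℝ³`. -/
def glap (N : ℕ) (f : ℕ → Fin 3 → ℝ) : ℕ → Fin 3 → ℝ := fun i =>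
  if i = 1 then ((gridh N) ^ 2)⁻¹ • (f 2 - f 1)
  else if i = N then ((gridh N) ^ 2)⁻¹ • (f (N - 1) - f N)
  else ((gridh N) ^ 2)⁻¹ • (f (i + 1) - (2 : ℝ) • f i + f (i - 1))

/-- Discrete gradient `(∇_h f)_i = (f_{i+1} − f_i)/h`. -/
def ggrad (N : ℕ) (f : ℕ → Fin 3 → ℝ) : ℕ → Fin 3 → ℝ := fun i =>
  (gridh N)⁻¹ • (f (i + 1) - f i)

/-- Discrete inner product `⟨f,g⟩ = h ∑_{i=1}^N f_i · g_i`. -/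
def gip (N : ℕ) (f g : ℕ → Fin 3 → ℝ) : ℝ :=
  gridh N * ∑ i ∈ Finset.Icc 1 N, dot3 (f i) (g i)

/-- Discrete `‖·‖₂` norm. -/
def gnorm2 (N : ℕ) (f : ℕ → Fin 3 → ℝ) : ℝ := Real.sqrt (gip N f f)

/-- Discrete inner product of gradients `⟨∇_h f, ∇_h g⟩ = h ∑_{i=1}^{N−1} (∇_h f)_i · (∇_h g)_i`. -/
def gipGrad (N : ℕ) (f g : ℕ → Fin 3 → ℝ) : ℝ :=
  gridh N * ∑ i ∈ Finset.Icc 1 (N - 1), dot3 (ggrad N f i) (ggrad N g i)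

/-- Discrete `‖∇_h ·‖₂` norm. -/
def gnormGrad (N : ℕ) (f : ℕ → Fin 3 → ℝ) : ℝ := Real.sqrt (gipGrad N f f)

/-- Discrete `‖·‖_∞` norm. -/
def gsup (N : ℕ) (f : ℕ → Fin 3 → ℝ) : ℝ := ⨆ i ∈ Finset.Icc 1 N, norm3 (f i)

/-- Discrete `‖∇_h ·‖_∞` norm. -/
def gsupGrad (N : ℕ) (f : ℕ → Fin 3 → ℝ) : ℝ :=
  ⨆ i ∈ Finset.Icc 1 (N - 1), norm3 (ggrad N f i)

/-!
Pointwise, `e = (m - m̃) + ẽ`, and normalising `m̃` moves it by `|1 - |m̃|| = ||m_e| - |m̃||`,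
which is at most `|m̃ - m_e| ≤ |ẽ| + h² |m¹|`; hence `|e_i| ≤ 2 |ẽ_i| + K h²`. Minkowski's
inequality for the weighted `ℓ²` norm turns this into the `L²` bound, the constant grid function
`K h²` having norm `K h² √(h N) ≤ K h²`.
-/

lemma norm3_eq_norm (a : Fin 3 → ℝ) :
    norm3 a = ‖(WithLp.toLp 2 a : EuclideanSpace ℝ (Fin 3))‖ := by
  simp [norm3, dot3, EuclideanSpace.norm_eq, sq]

lemma norm3_nonneg (a : Fin 3 → ℝ) : 0 ≤ norm3 a := Real.sqrt_nonneg _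

lemma norm3_sq (a : Fin 3 → ℝ) : norm3 a ^ 2 = dot3 a a :=
  Real.sq_sqrt (Finset.sum_nonneg fun _ _ => mul_self_nonneg _)

lemma norm3_smul (c : ℝ) (a : Fin 3 → ℝ) : norm3 (c • a) = |c| * norm3 a := by
  simp only [norm3_eq_norm, WithLp.toLp_smul, norm_smul, Real.norm_eq_abs]

theorem norm_inv_norm_smul_sub_le {E : Type*} [NormedAddCommGroup E] [NormedSpace ℝ E]
    {u : E} (hu : ‖u‖ = 1) (v w : E) : ‖‖v‖⁻¹ • v - w‖ ≤ 2 * ‖v - w‖ + ‖w - u‖ := by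
  have hproj : ‖‖v‖⁻¹ • v - v‖ ≤ ‖u - v‖ := by
    rcases eq_or_ne v 0 with rfl | hv
    · simp
    calc ‖‖v‖⁻¹ • v - v‖ = ‖(‖v‖⁻¹ - 1) • v‖ := by rw [sub_smul, one_smul]
      _ = |(‖v‖⁻¹ - 1) * ‖v‖| := by rw [norm_smul, Real.norm_eq_abs, abs_mul, abs_norm]
      _ = |‖u‖ - ‖v‖| := by rw [hu, sub_mul, inv_mul_cancel₀ (norm_ne_zero_iff.mpr hv), one_mul]
      _ ≤ ‖u - v‖ := abs_norm_sub_norm_le u v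
  calc ‖‖v‖⁻¹ • v - w‖ ≤ ‖‖v‖⁻¹ • v - v‖ + ‖v - w‖ := norm_sub_le_norm_sub_add_norm_sub _ _ _
    _ ≤ ‖u - w‖ + ‖w - v‖ + ‖v - w‖ := by
        gcongr
        exact hproj.trans (norm_sub_le_norm_sub_add_norm_sub _ _ _)
    _ = 2 * ‖v - w‖ + ‖w - u‖ := by rw [norm_sub_rev u, norm_sub_rev w v]; ring

lemma norm3_inv_norm3_smul_sub_le {u : Fin 3 → ℝ} (hu : norm3 u = 1) (v w : Fin 3 → ℝ) :
    norm3 ((norm3 v)⁻¹ • v - w) ≤ 2 * norm3 (v - w) + norm3 (w - u) := by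
  simp only [norm3_eq_norm, WithLp.toLp_sub, WithLp.toLp_smul] at hu ⊢
  exact norm_inv_norm_smul_sub_le hu _ _

theorem le_ciSup₂_of_mem_finset {ι α : Type*} [ConditionallyCompleteLattice α] {s : Finset ι}
    (f : ι → α) {i : ι} (hi : i ∈ s) : f i ≤ ⨆ j ∈ s, f j := by
  refine le_ciSup₂ (f := fun j (_ : j ∈ s) => f j) ?_ i hi
  refine (s.finite_toSet.image f).bddAbove.mono ?_
  rintro _ ⟨_, ⟨j, rfl⟩, ⟨hj, rfl⟩⟩
  exact ⟨j, hj, rfl⟩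

lemma norm3_le_gsup (N : ℕ) (f : ℕ → Fin 3 → ℝ) {i : ℕ} (hi : i ∈ Finset.Icc 1 N) :
    norm3 (f i) ≤ gsup N f :=
  le_ciSup₂_of_mem_finset (fun j => norm3 (f j)) hi

lemma gsup_nonneg (N : ℕ) (f : ℕ → Fin 3 → ℝ) : 0 ≤ gsup N f :=
  Real.iSup_nonneg fun _ => Real.iSup_nonneg fun _ => norm3_nonneg _

theorem sqrt_sum_add_sq_le {ι : Type*} (s : Finset ι) (x y : ι → ℝ) :
    √(∑ i ∈ s, (x i + y i) ^ 2) ≤ √(∑ i ∈ s, x i ^ 2) + √(∑ i ∈ s, y i ^ 2) := by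
  rw [← Finset.sum_coe_sort s, ← Finset.sum_coe_sort s, ← Finset.sum_coe_sort s]
  simpa only [EuclideanSpace.norm_eq, ← WithLp.toLp_add, PiLp.toLp_apply, Pi.add_apply,
    Real.norm_eq_abs, sq_abs] using
    norm_add_le (WithLp.toLp 2 fun i : s => x i : EuclideanSpace ℝ s)
      (WithLp.toLp 2 fun i : s => y i)

lemma gridh_nonneg (N : ℕ) : 0 ≤ gridh N := by
  unfold gridh; positivity

lemma gridh_mul_le_one (N : ℕ) : gridh N * N ≤ 1 := by
  rcases N.eq_zero_or_pos with rfl | hN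
  · simp
  · rw [gridh, one_div_mul_cancel (by positivity)]

lemma gnorm2_eq (N : ℕ) (f : ℕ → Fin 3 → ℝ) :
    gnorm2 N f = √(gridh N) * √(∑ i ∈ Finset.Icc 1 N, norm3 (f i) ^ 2) := by
  simp only [gnorm2, gip, norm3_sq, Real.sqrt_mul (gridh_nonneg N)]

theorem gnorm2_le_of_norm3_le {N : ℕ} {f g : ℕ → Fin 3 → ℝ} {a c : ℝ} (ha : 0 ≤ a) (hc : 0 ≤ c)
    (h : ∀ i ∈ Finset.Icc 1 N, norm3 (f i) ≤ a * norm3 (g i) + c) :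
    gnorm2 N f ≤ a * gnorm2 N g + c := by
  rw [gnorm2_eq, gnorm2_eq]
  calc √(gridh N) * √(∑ i ∈ Finset.Icc 1 N, norm3 (f i) ^ 2)
      ≤ √(gridh N) * √(∑ i ∈ Finset.Icc 1 N, (a * norm3 (g i) + c) ^ 2) := by
        gcongr with i hi
        exacts [norm3_nonneg _, h i hi]
    _ ≤ √(gridh N) * (√(∑ i ∈ Finset.Icc 1 N, (a * norm3 (g i)) ^ 2)
          + √(∑ _i ∈ Finset.Icc 1 N, c ^ 2)) := by
        gcongr
        exact sqrt_sum_add_sq_le _ _ _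
    _ = a * (√(gridh N) * √(∑ i ∈ Finset.Icc 1 N, norm3 (g i) ^ 2)) + c * √(gridh N * N) := by
        simp only [mul_pow, ← Finset.mul_sum, Finset.sum_const, Nat.card_Icc,
          add_tsub_cancel_right, nsmul_eq_mul, Real.sqrt_mul (sq_nonneg _),
          Real.sqrt_mul (gridh_nonneg N), Real.sqrt_mul' _ (sq_nonneg _), Real.sqrt_sq ha,
          Real.sqrt_sq hc]
        ring
    _ ≤ a * (√(gridh N) * √(∑ i ∈ Finset.Icc 1 N, norm3 (g i) ^ 2)) + c := by
        gcongr
        exact mul_le_of_le_one_right hc (Real.sqrt_le_one.mpr (gridh_mul_le_one N))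

theorem projection_step_L2_error_general
    (N : ℕ) (K : ℝ)
    (me m1 mt : ℕ → Fin 3 → ℝ)
    (hme : ∀ i ∈ Finset.Icc 1 N, norm3 (me i) = 1)
    (hm1 : gsup N m1 ≤ K)
    (m mbar e et : ℕ → Fin 3 → ℝ)
    (hm : ∀ i, m i = (norm3 (mt i))⁻¹ • mt i)
    (hmbar : ∀ i, mbar i = me i + (gridh N) ^ 2 • m1 i)
    (he : ∀ i, e i = m i - mbar i)
    (het : ∀ i, et i = mt i - mbar i) :
    gnorm2 N e ≤ 2 * gnorm2 N et + K * (gridh N) ^ 2 := by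
  have hK : 0 ≤ K := (gsup_nonneg N m1).trans hm1
  refine gnorm2_le_of_norm3_le zero_le_two (by positivity) fun i hi => ?_
  have hcorr : norm3 (mbar i - me i) ≤ K * gridh N ^ 2 := by
    rw [hmbar, add_sub_cancel_left, norm3_smul, abs_of_nonneg (by positivity), mul_comm]
    gcongr
    exact (norm3_le_gsup N m1 hi).trans hm1
  calc norm3 (e i) = norm3 ((norm3 (mt i))⁻¹ • mt i - mbar i) := by rw [he, hm]
    _ ≤ 2 * norm3 (mt i - mbar i) + norm3 (mbar i - me i) :=
        norm3_inv_norm3_smul_sub_le (hme i hi) _ _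
    _ ≤ 2 * norm3 (et i) + K * gridh N ^ 2 := by rw [← het]; gcongr

/-- L² error estimate for the projection step:
with `m̲ = m_e + h²·m¹`, `|m_e| ≡ 1`, `‖m¹‖_∞ ≤ K`, `|m̃| ≥ 1/2` on the grid and
`m = m̃/|m̃|`, the errors `e = m − m̲`, `ẽ = m̃ − m̲` satisfy `‖e‖₂ ≤ 2‖ẽ‖₂ + K·h²`. -/
theorem projection_step_L2_error
    (N : ℕ) (hN : 2 ≤ N) (K : ℝ)
    (me m1 mt : ℕ → Fin 3 → ℝ)
    (hme : ∀ i ∈ Finset.Icc 1 N, norm3 (me i) = 1)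
    (hm1 : gsup N m1 ≤ K)
    (hmt : ∀ i ∈ Finset.Icc 1 N, 1 / 2 ≤ norm3 (mt i))
    (m mbar e et : ℕ → Fin 3 → ℝ)
    (hm : ∀ i, m i = (norm3 (mt i))⁻¹ • mt i)
    (hmbar : ∀ i, mbar i = me i + (gridh N) ^ 2 • m1 i)
    (he : ∀ i, e i = m i - mbar i)
    (het : ∀ i, et i = mt i - mbar i) :
    gnorm2 N e ≤ 2 * gnorm2 N et + K * (gridh N) ^ 2 :=
  projection_step_L2_error_general N K me m1 mt hme hm1 m mbar e et hm hmbar he het
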